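/- Completeness of C^n_Lip: for all real Banach spaces V₁, V₂ and every integer n ≥ 0, the normed space (C^n_Lip(V₁,V₂), ‖·‖_{C^n_Lip(V₁,V₂)}) is complete; i.e., for every sequence (φ_m)_{m∈ℕ} in C^n_Lip(V₁,V₂) with lim_{m,l→∞} ‖φ_m − φ_l‖_{C^n_Lip(V₁,V₂)} = 0 there exists φ ∈ C^n_Lip(V₁,V₂) with lim_{m→∞} ‖φ_m − φ‖_{C^n_Lip(V₁,V₂)} = 0. -/

import Mathlib

open Filter
open scoped ENNReal NNReal Topology

/-- The `C^n_Lip` norm of the paper: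
`‖φ‖_{C^n_Lip} = ‖φ(0)‖ + Σ_{i=1}^n sup_v ‖φ^{(i)}(v)‖ + sup_{v≠w} ‖φ^{(n)}(v)−φ^{(n)}(w)‖/‖v−w‖`,
as an element of `[0,∞]`. -/
noncomputable def CnLipNorm {V₁ V₂ : Type*} [NormedAddCommGroup V₁] [NormedSpace ℝ V₁]
    [NormedAddCommGroup V₂] [NormedSpace ℝ V₂] (n : ℕ) (φ : V₁ → V₂) : ℝ≥0∞ :=
  (‖φ 0‖₊ : ℝ≥0∞)
    + ∑ i ∈ Finset.Icc 1 n, ⨆ v : V₁, (‖iteratedFDeriv ℝ i φ v‖₊ : ℝ≥0∞)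
    + ⨆ (v : V₁) (w : V₁) (_ : v ≠ w),
        (‖iteratedFDeriv ℝ n φ v - iteratedFDeriv ℝ n φ w‖₊ : ℝ≥0∞) / (‖v - w‖₊ : ℝ≥0∞)

/-!
Along a `C^n_Lip`-Cauchy sequence the derivatives of orders `1, …, n` are uniformly Cauchy and the
values at `0` are Cauchy; by the mean value theorem the functions are then locally uniformly Cauchy.
Locally uniform limits of `Cⁿ` functions whose derivatives also converge locally uniformly are `Cⁿ`,
with the limits as derivatives, which gives the limit `ψ` (for `n = 0` the norm only sees the value
at `0`, and a constant does). Every term of `CnLipNorm` is a supremum of continuous functions of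
finitely many derivative values, so `CnLipNorm` is lower semicontinuous under pointwise convergence
of derivatives: `CnLipNorm n (φ m - ψ) ≤ liminf_l CnLipNorm n (φ m - φ l)`, which is small for large
`m`. Finiteness of `CnLipNorm n ψ` follows by the triangle inequality.
-/

theorem uniformCauchySeqOn_of_edist_le {ι α β : Type*} [PseudoEMetricSpace β] {l : Filter ι}
    {F : ι → α → β} {s : Set α} {d : ι × ι → ℝ≥0∞} (hd : Tendsto d (l ×ˢ l) (𝓝 0))
    (h : ∀ p, ∀ x ∈ s, edist (F p.1 x) (F p.2 x) ≤ d p) : UniformCauchySeqOn F l s := by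
  intro u hu
  obtain ⟨ε, hε, hεu⟩ := mem_uniformity_edist.mp hu
  filter_upwards [hd.eventually (gt_mem_nhds hε)] with p hp x hx
  exact hεu ((h p x hx).trans_lt hp)

theorem iSup_le_liminf_iSup {α β : Type*} {ι : Sort*} [CompleteLattice α] {f : Filter β}
    {v : ι → α} {u : ι → β → α} (h : ∀ i, v i ≤ liminf (u i) f) :
    ⨆ i, v i ≤ liminf (fun b => ⨆ i, u i b) f :=
  iSup_le fun i => (h i).trans (liminf_le_liminf (.of_forall fun b => le_iSup (u · b) i))

theorem ENNReal.le_liminf_add {β : Type*} {f : Filter β} (u v : β → ℝ≥0∞) :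
    liminf u f + liminf v f ≤ liminf (u + v) f := by
  simp only [liminf_eq_iSup_iInf]
  refine ENNReal.biSup_add_biSup_le' ⟨_, univ_mem⟩ ⟨_, univ_mem⟩ fun s hs t ht => ?_
  exact le_iSup₂_of_le (s ∩ t) (inter_mem hs ht)
    (le_iInf₂ fun b hb => add_le_add (iInf₂_le b hb.1) (iInf₂_le b hb.2))

theorem ENNReal.sum_liminf_le_liminf_sum {ι β : Type*} {f : Filter β} (s : Finset ι)
    (u : ι → β → ℝ≥0∞) : ∑ i ∈ s, liminf (u i) f ≤ liminf (fun b => ∑ i ∈ s, u i b) f := by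
  classical
  induction s using Finset.induction_on with
  | empty => simp
  | insert a s ha ih =>
    simp only [Finset.sum_insert ha]
    exact (add_le_add le_rfl ih).trans (ENNReal.le_liminf_add _ _)

section UniformLimits

variable {𝕜 E F : Type*} [RCLike 𝕜] [NormedAddCommGroup E] [NormedSpace 𝕜 E]
  [NormedAddCommGroup F] [NormedSpace 𝕜 F] {ι : Type*} {l : Filter ι}

theorem hasFTaylorSeriesUpTo_of_tendstoLocallyUniformly [l.NeBot] {n : ℕ} {f : ι → E → F}
    {p : E → FormalMultilinearSeries 𝕜 E F} (hf : ∀ k, ContDiff 𝕜 n (f k))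
    (hp : ∀ i ≤ n, TendstoLocallyUniformly (fun k => iteratedFDeriv 𝕜 i (f k))
      (fun x => p x i) l) :
    HasFTaylorSeriesUpTo n (fun x => (p x 0).curry0) p where
  zero_eq _ := rfl
  fderiv i hi x := by
    have hi : i < n := by exact_mod_cast hi
    have hcurry := (continuousMultilinearCurryLeftEquiv 𝕜 (fun _ : Fin (i + 1) => E) F).isometry
      |>.uniformContinuous.comp_tendstoLocallyUniformly (hp (i + 1) hi)
    exact hasFDerivAt_of_tendstoLocallyUniformlyOn isOpen_univ hcurry.tendstoLocallyUniformlyOn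
      (fun k y _ => (contDiff_iff_ftaylorSeries.mp (hf k)).fderiv i (by exact_mod_cast hi) y)
      (fun y _ => (hp i hi.le).tendstoLocallyUniformlyOn.tendsto_at (Set.mem_univ y))
      (Set.mem_univ x)
  cont i hi := (hp i (by exact_mod_cast hi)).continuous
    (Frequently.of_forall fun k => (hf k).continuous_iteratedFDeriv (by exact_mod_cast hi))

theorem tendstoLocallyUniformly_limUnder {α β : Type*} [TopologicalSpace α] [UniformSpace β]
    [CompleteSpace β] [Nonempty β] [l.NeBot] {F : ι → α → β}
    (hF : ∀ x, UniformCauchySeqOnFilter F l (𝓝 x)) :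
    TendstoLocallyUniformly F (fun x => limUnder l (F · x)) l :=
  tendstoLocallyUniformly_iff_filter.mpr fun x => (hF x).tendstoUniformlyOnFilter_of_tendsto <|
    .of_forall fun y => tendsto_nhds_limUnder <| cauchy_map_iff_exists_tendsto.mp <|
      (uniformCauchySeqOn_iff_uniformCauchySeqOnFilter (s := {y}).mpr <|
        (hF y).mono_right (by simpa using pure_le_nhds y)).cauchy_map (Set.mem_singleton y)

theorem uniformCauchySeqOnFilter_nhds_of_fderiv [l.NeBot] {f : ι → E → F}
    {f' : ι → E → E →L[𝕜] F} (hf' : UniformCauchySeqOn f' l Set.univ)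
    (hf : ∀ k x, HasFDerivAt (f k) (f' k x) x) {x₀ : E} (hx₀ : Cauchy (map (fun k => f k x₀) l))
    (x : E) : UniformCauchySeqOnFilter f l (𝓝 x) :=
  letI : NormedSpace ℝ E := NormedSpace.restrictScalars ℝ 𝕜 E
  uniformCauchySeqOnFilter_of_fderiv
    (hf'.uniformCauchySeqOnFilter.mono_right (by simp)) (.of_forall fun k => hf k.1 k.2)
    (cauchy_map_of_uniformCauchySeqOn_fderiv isOpen_univ isPreconnected_univ hf'
      (fun k y _ => hf k y) (Set.mem_univ x₀) (Set.mem_univ x) hx₀)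

theorem exists_contDiff_tendsto_iteratedFDeriv [CompleteSpace F] [l.NeBot] {n : ℕ} (hn : 1 ≤ n)
    {f : ι → E → F} (hf : ∀ k, ContDiff 𝕜 n (f k)) {x₀ : E}
    (hx₀ : Cauchy (map (fun k => f k x₀) l))
    (hD : ∀ i ∈ Finset.Icc 1 n, UniformCauchySeqOn (fun k => iteratedFDeriv 𝕜 i (f k)) l Set.univ) :
    ∃ g : E → F, ContDiff 𝕜 n g ∧ (∀ x, Tendsto (fun k => f k x) l (𝓝 (g x))) ∧
      ∀ i ≤ n, ∀ x,
        Tendsto (fun k => iteratedFDeriv 𝕜 i (f k) x) l (𝓝 (iteratedFDeriv 𝕜 i g x)) := by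
  have hcauchy : ∀ i ≤ n, ∀ x,
      UniformCauchySeqOnFilter (fun k => iteratedFDeriv 𝕜 i (f k)) l (𝓝 x) := by
    rintro (_ | i) hi x
    · exact uniformCauchySeqOnFilter_nhds_of_fderiv
        ((continuousMultilinearCurryLeftEquiv 𝕜 (fun _ : Fin 1 => E) F).isometry.uniformContinuous
          |>.comp_uniformCauchySeqOn (hD 1 (Finset.mem_Icc.mpr ⟨le_rfl, hn⟩)))
        (fun k y => (contDiff_iff_ftaylorSeries.mp (hf k)).fderiv 0 (by exact_mod_cast hn) y)
        (hx₀.map (continuousMultilinearCurryFin0 𝕜 E F).symm.isometry.uniformContinuous) x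
    · exact (hD (i + 1) (Finset.mem_Icc.mpr ⟨by omega, hi⟩)).uniformCauchySeqOnFilter.mono_right
        (by simp)
  let p : E → FormalMultilinearSeries 𝕜 E F :=
    fun x i => limUnder l fun k => iteratedFDeriv 𝕜 i (f k) x
  have hp : ∀ i ≤ n,
      TendstoLocallyUniformly (fun k => iteratedFDeriv 𝕜 i (f k)) (fun x => p x i) l :=
    fun i hi => tendstoLocallyUniformly_limUnder (hcauchy i hi)
  have hT := hasFTaylorSeriesUpTo_of_tendstoLocallyUniformly hf hp
  have htendsto : ∀ i ≤ n, ∀ x, Tendsto (fun k => iteratedFDeriv 𝕜 i (f k) x) l (𝓝 (p x i)) :=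
    fun i hi x => (hp i hi).tendstoLocallyUniformlyOn.tendsto_at (Set.mem_univ x)
  refine ⟨_, hT.contDiff, fun x => ?_, fun i hi x => ?_⟩
  · exact ((continuousMultilinearCurryFin0 𝕜 E F).continuous.tendsto _).comp
      (htendsto 0 (Nat.zero_le n) x)
  · rw [← hT.eq_iteratedFDeriv (by exact_mod_cast hi)]
    exact htendsto i hi x

end UniformLimits

section CnLipNorm

variable {V₁ V₂ : Type*} [NormedAddCommGroup V₁] [NormedSpace ℝ V₁]
  [NormedAddCommGroup V₂] [NormedSpace ℝ V₂]

noncomputable def iteratedFDerivSupNorm (i : ℕ) (f : V₁ → V₂) : ℝ≥0∞ :=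
  ⨆ v : V₁, (‖iteratedFDeriv ℝ i f v‖₊ : ℝ≥0∞)

noncomputable def iteratedFDerivLipConst (n : ℕ) (f : V₁ → V₂) : ℝ≥0∞ :=
  ⨆ (v : V₁) (w : V₁) (_ : v ≠ w),
    (‖iteratedFDeriv ℝ n f v - iteratedFDeriv ℝ n f w‖₊ : ℝ≥0∞) / (‖v - w‖₊ : ℝ≥0∞)

/-- `∑` and `⨆` extend as far right as possible, so in `CnLipNorm` the Lipschitz term sits inside
the sum: it is counted once for each `i`, and not at all when `n = 0`. -/
theorem cnLipNorm_eq (n : ℕ) (f : V₁ → V₂) :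
    CnLipNorm n f = ‖f 0‖ₑ
      + ∑ i ∈ Finset.Icc 1 n, (iteratedFDerivSupNorm i f + iteratedFDerivLipConst n f) := by
  simp only [iteratedFDerivSupNorm, ENNReal.iSup_add]
  rfl

theorem enorm_apply_zero_le_cnLipNorm (n : ℕ) (f : V₁ → V₂) : ‖f 0‖ₑ ≤ CnLipNorm n f :=
  cnLipNorm_eq n f ▸ le_self_add

theorem enorm_iteratedFDeriv_le_cnLipNorm {n i : ℕ} (hi : i ∈ Finset.Icc 1 n) (f : V₁ → V₂)
    (v : V₁) : ‖iteratedFDeriv ℝ i f v‖ₑ ≤ CnLipNorm n f :=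
  calc ‖iteratedFDeriv ℝ i f v‖ₑ ≤ iteratedFDerivSupNorm i f :=
        le_iSup (fun v => (‖iteratedFDeriv ℝ i f v‖₊ : ℝ≥0∞)) v
    _ ≤ iteratedFDerivSupNorm i f + iteratedFDerivLipConst n f := le_self_add
    _ ≤ ∑ i ∈ Finset.Icc 1 n, (iteratedFDerivSupNorm i f + iteratedFDerivLipConst n f) :=
        Finset.single_le_sum (f := fun i => iteratedFDerivSupNorm i f + iteratedFDerivLipConst n f)
          (fun _ _ => bot_le) hi
    _ ≤ CnLipNorm n f := cnLipNorm_eq n f ▸ le_add_self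

theorem iteratedFDeriv_sub_apply_of_le {i n : ℕ} (hi : i ≤ n) {f g : V₁ → V₂}
    (hf : ContDiff ℝ n f) (hg : ContDiff ℝ n g) (v : V₁) :
    iteratedFDeriv ℝ i (f - g) v = iteratedFDeriv ℝ i f v - iteratedFDeriv ℝ i g v :=
  have hi : (i : WithTop ℕ∞) ≤ n := by exact_mod_cast hi
  iteratedFDeriv_sub_apply (hf.of_le hi).contDiffAt (hg.of_le hi).contDiffAt

theorem iteratedFDerivSupNorm_sub_le {i : ℕ} {f g : V₁ → V₂} (hf : ContDiff ℝ i f)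
    (hg : ContDiff ℝ i g) :
    iteratedFDerivSupNorm i (f - g) ≤ iteratedFDerivSupNorm i f + iteratedFDerivSupNorm i g :=
  iSup_le fun v => by
    rw [iteratedFDeriv_sub_apply hf.contDiffAt hg.contDiffAt]
    exact enorm_sub_le.trans (add_le_add (le_iSup (fun v => (‖iteratedFDeriv ℝ i f v‖₊ : ℝ≥0∞)) v)
      (le_iSup (fun v => (‖iteratedFDeriv ℝ i g v‖₊ : ℝ≥0∞)) v))

theorem iteratedFDerivLipConst_sub_le {n : ℕ} {f g : V₁ → V₂} (hf : ContDiff ℝ n f)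
    (hg : ContDiff ℝ n g) :
    iteratedFDerivLipConst n (f - g) ≤ iteratedFDerivLipConst n f + iteratedFDerivLipConst n g :=
  iSup_le fun v => iSup_le fun w => iSup_le fun hvw => by
    have hle : ∀ h : V₁ → V₂, ‖iteratedFDeriv ℝ n h v - iteratedFDeriv ℝ n h w‖ₑ / ‖v - w‖ₑ
        ≤ iteratedFDerivLipConst n h := fun h => le_iSup₂_of_le v w (le_iSup_of_le hvw le_rfl)
    rw [iteratedFDeriv_sub_apply hf.contDiffAt hg.contDiffAt,
      iteratedFDeriv_sub_apply hf.contDiffAt hg.contDiffAt, sub_sub_sub_comm]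
    calc _ ≤ (‖iteratedFDeriv ℝ n f v - iteratedFDeriv ℝ n f w‖ₑ
            + ‖iteratedFDeriv ℝ n g v - iteratedFDeriv ℝ n g w‖ₑ) / ‖v - w‖ₑ :=
          ENNReal.div_le_div_right enorm_sub_le _
      _ ≤ _ := ENNReal.add_div.trans_le (add_le_add (hle f) (hle g))

theorem cnLipNorm_sub_le {n : ℕ} {f g : V₁ → V₂} (hf : ContDiff ℝ n f) (hg : ContDiff ℝ n g) :
    CnLipNorm n (f - g) ≤ CnLipNorm n f + CnLipNorm n g := by
  simp only [cnLipNorm_eq]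
  calc _ ≤ (‖f 0‖ₑ + ‖g 0‖ₑ) + ∑ i ∈ Finset.Icc 1 n,
        ((iteratedFDerivSupNorm i f + iteratedFDerivSupNorm i g)
          + (iteratedFDerivLipConst n f + iteratedFDerivLipConst n g)) := by
        gcongr with i hi
        · exact enorm_sub_le
        · have hin : (i : WithTop ℕ∞) ≤ n := by exact_mod_cast (Finset.mem_Icc.mp hi).2
          exact iteratedFDerivSupNorm_sub_le (hf.of_le hin) (hg.of_le hin)
        · exact iteratedFDerivLipConst_sub_le hf hg
    _ = _ := by simp only [add_add_add_comm, Finset.sum_add_distrib]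

theorem iteratedFDerivSupNorm_le_liminf {ι : Type*} {l : Filter ι} [l.NeBot] {i : ℕ}
    {f : ι → V₁ → V₂} {g : V₁ → V₂}
    (h : ∀ v, Tendsto (fun b => iteratedFDeriv ℝ i (f b) v) l (𝓝 (iteratedFDeriv ℝ i g v))) :
    iteratedFDerivSupNorm i g ≤ liminf (fun b => iteratedFDerivSupNorm i (f b)) l :=
  iSup_le_liminf_iSup fun v => (h v).enorm.liminf_eq.ge

theorem iteratedFDerivLipConst_le_liminf {ι : Type*} {l : Filter ι} [l.NeBot] {n : ℕ}
    {f : ι → V₁ → V₂} {g : V₁ → V₂}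
    (h : ∀ v, Tendsto (fun b => iteratedFDeriv ℝ n (f b) v) l (𝓝 (iteratedFDeriv ℝ n g v))) :
    iteratedFDerivLipConst n g ≤ liminf (fun b => iteratedFDerivLipConst n (f b)) l := by
  unfold iteratedFDerivLipConst
  refine iSup_le_liminf_iSup fun v => iSup_le_liminf_iSup fun w => iSup_le_liminf_iSup fun hvw => ?_
  exact (ENNReal.Tendsto.div_const ((h v).sub (h w)).enorm
    (.inr (by simpa [sub_eq_zero] using hvw))).liminf_eq.ge

theorem cnLipNorm_le_liminf {ι : Type*} {l : Filter ι} [l.NeBot] {n : ℕ} {f : ι → V₁ → V₂}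
    {g : V₁ → V₂} (h0 : Tendsto (fun b => f b 0) l (𝓝 (g 0)))
    (hD : ∀ i ∈ Finset.Icc 1 n, ∀ v,
      Tendsto (fun b => iteratedFDeriv ℝ i (f b) v) l (𝓝 (iteratedFDeriv ℝ i g v))) :
    CnLipNorm n g ≤ liminf (fun b => CnLipNorm n (f b)) l := by
  simp only [cnLipNorm_eq]
  calc _ ≤ liminf (fun b => ‖f b 0‖ₑ) l + ∑ i ∈ Finset.Icc 1 n,
        (liminf (fun b => iteratedFDerivSupNorm i (f b)) l
          + liminf (fun b => iteratedFDerivLipConst n (f b)) l) := by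
        gcongr with i hi
        · exact h0.enorm.liminf_eq.ge
        · exact iteratedFDerivSupNorm_le_liminf (hD i hi)
        · have hn : n ∈ Finset.Icc 1 n := Finset.mem_Icc.mpr
            ⟨(Finset.mem_Icc.mp hi).1.trans (Finset.mem_Icc.mp hi).2, le_rfl⟩
          exact iteratedFDerivLipConst_le_liminf (hD n hn)
    _ ≤ _ := by
        refine le_trans ?_ (ENNReal.le_liminf_add _ _)
        gcongr
        refine le_trans ?_ (ENNReal.sum_liminf_le_liminf_sum _ _)
        gcongr with i
        exact ENNReal.le_liminf_add _ _

theorem exists_contDiff_tendsto_of_cnLipNorm_cauchy [CompleteSpace V₂] {n : ℕ}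
    {φ : ℕ → V₁ → V₂} (hφ : ∀ m, ContDiff ℝ n (φ m))
    (hcauchy : Tendsto (fun p : ℕ × ℕ => CnLipNorm n (φ p.1 - φ p.2)) atTop (𝓝 0)) :
    ∃ ψ : V₁ → V₂, ContDiff ℝ n ψ ∧ Tendsto (fun m => φ m 0) atTop (𝓝 (ψ 0)) ∧
      ∀ i ∈ Finset.Icc 1 n, ∀ v,
        Tendsto (fun m => iteratedFDeriv ℝ i (φ m) v) atTop (𝓝 (iteratedFDeriv ℝ i ψ v)) := by
  rw [← prod_atTop_atTop_eq] at hcauchy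
  have h0 : Cauchy (map (fun m => φ m 0) atTop) :=
    (uniformCauchySeqOn_of_edist_le (F := φ) (s := {0}) hcauchy fun p x hx => by
      rw [Set.mem_singleton_iff.mp hx, edist_eq_enorm_sub]
      exact enorm_apply_zero_le_cnLipNorm n _).cauchy_map rfl
  rcases Nat.eq_zero_or_pos n with rfl | hn
  · obtain ⟨y, hy⟩ := cauchy_map_iff_exists_tendsto.mp h0
    exact ⟨fun _ => y, contDiff_const, hy, by simp⟩
  have hD : ∀ i ∈ Finset.Icc 1 n,
      UniformCauchySeqOn (fun m => iteratedFDeriv ℝ i (φ m)) atTop Set.univ := fun i hi =>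
    uniformCauchySeqOn_of_edist_le hcauchy fun p v _ => by
      rw [edist_eq_enorm_sub, ← iteratedFDeriv_sub_apply_of_le (Finset.mem_Icc.mp hi).2 (hφ p.1)
        (hφ p.2)]
      exact enorm_iteratedFDeriv_le_cnLipNorm hi _ v
  obtain ⟨ψ, hψ, hψ0, hψD⟩ := exists_contDiff_tendsto_iteratedFDeriv hn hφ h0 hD
  exact ⟨ψ, hψ, hψ0 0, fun i hi => hψD i (Finset.mem_Icc.mp hi).2⟩

theorem tendsto_cnLipNorm_sub_of_cauchy {n : ℕ} {φ : ℕ → V₁ → V₂} {ψ : V₁ → V₂}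
    (hφ : ∀ m, ContDiff ℝ n (φ m)) (hψ : ContDiff ℝ n ψ)
    (hcauchy : Tendsto (fun p : ℕ × ℕ => CnLipNorm n (φ p.1 - φ p.2)) atTop (𝓝 0))
    (h0 : Tendsto (fun m => φ m 0) atTop (𝓝 (ψ 0)))
    (hD : ∀ i ∈ Finset.Icc 1 n, ∀ v,
      Tendsto (fun m => iteratedFDeriv ℝ i (φ m) v) atTop (𝓝 (iteratedFDeriv ℝ i ψ v))) :
    Tendsto (fun m => CnLipNorm n (φ m - ψ)) atTop (𝓝 0) := by
  refine ENNReal.tendsto_nhds_zero.mpr fun ε hε => ?_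
  obtain ⟨N, hN⟩ := eventually_atTop_prod_self'.mp (ENNReal.tendsto_nhds_zero.mp hcauchy ε hε)
  filter_upwards [eventually_ge_atTop N] with m hm
  have hlim : CnLipNorm n (φ m - ψ) ≤ liminf (fun l => CnLipNorm n (φ m - φ l)) atTop := by
    refine cnLipNorm_le_liminf (tendsto_const_nhds.sub h0) fun i hi v => ?_
    have hin := (Finset.mem_Icc.mp hi).2
    rw [iteratedFDeriv_sub_apply_of_le hin (hφ m) hψ]
    exact (tendsto_const_nhds.sub (hD i hi v)).congr fun l =>
      (iteratedFDeriv_sub_apply_of_le hin (hφ m) (hφ l) v).symm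
  exact hlim.trans (liminf_le_of_frequently_le'
    ((eventually_ge_atTop N).mono fun l hl => hN m hm l hl).frequently)

end CnLipNorm

theorem CnLipNorm_complete_general {V₁ V₂ : Type*}
    [NormedAddCommGroup V₁] [NormedSpace ℝ V₁]
    [NormedAddCommGroup V₂] [NormedSpace ℝ V₂] [CompleteSpace V₂]
    (n : ℕ)
    (φ : ℕ → V₁ → V₂)
    (hmem : ∀ m : ℕ, ContDiff ℝ n (φ m) ∧ CnLipNorm n (φ m) < ⊤)
    (hcauchy : Tendsto (fun p : ℕ × ℕ => CnLipNorm n (φ p.1 - φ p.2)) atTop (𝓝 0)) :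
    ∃ ψ : V₁ → V₂, ContDiff ℝ n ψ ∧ CnLipNorm n ψ < ⊤ ∧
      Tendsto (fun m : ℕ => CnLipNorm n (φ m - ψ)) atTop (𝓝 0) := by
  obtain ⟨ψ, hψ, hψ0, hψD⟩ :=
    exists_contDiff_tendsto_of_cnLipNorm_cauchy (fun m => (hmem m).1) hcauchy
  have hconv := tendsto_cnLipNorm_sub_of_cauchy (fun m => (hmem m).1) hψ hcauchy hψ0 hψD
  obtain ⟨m, hm⟩ := (hconv.eventually (gt_mem_nhds ENNReal.zero_lt_top)).exists
  refine ⟨ψ, hψ, ?_, hconv⟩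
  calc CnLipNorm n ψ = CnLipNorm n (φ m - (φ m - ψ)) := by rw [sub_sub_cancel]
    _ ≤ CnLipNorm n (φ m) + CnLipNorm n (φ m - ψ) :=
        cnLipNorm_sub_le (hmem m).1 ((hmem m).1.sub hψ)
    _ < ⊤ := ENNReal.add_lt_top.mpr ⟨(hmem m).2, hm⟩

/-- **Completeness of `C^n_Lip`**: every sequence in
`C^n_Lip(V₁,V₂) = {φ ∈ Cⁿ : ‖φ‖_{C^n_Lip} < ∞}` which is Cauchy with respect to
`‖·‖_{C^n_Lip}` converges in the `‖·‖_{C^n_Lip}`-sense to some element of `C^n_Lip(V₁,V₂)`. -/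
theorem CnLipNorm_complete {V₁ V₂ : Type*}
    [NormedAddCommGroup V₁] [NormedSpace ℝ V₁] [CompleteSpace V₁]
    [NormedAddCommGroup V₂] [NormedSpace ℝ V₂] [CompleteSpace V₂]
    (n : ℕ)
    (φ : ℕ → V₁ → V₂)
    (hmem : ∀ m : ℕ, ContDiff ℝ n (φ m) ∧ CnLipNorm n (φ m) < ⊤)
    (hcauchy : Tendsto (fun p : ℕ × ℕ => CnLipNorm n (φ p.1 - φ p.2)) atTop (𝓝 0)) :
    ∃ ψ : V₁ → V₂, ContDiff ℝ n ψ ∧ CnLipNorm n ψ < ⊤ ∧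
      Tendsto (fun m : ℕ => CnLipNorm n (φ m - ψ)) atTop (𝓝 0) :=
  CnLipNorm_complete_general n φ hmem hcauchy
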